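/- Let Φ be an m×d real matrix with restricted isometry constant δ_{2s} = δ < √2 − 1. Let x, x̂, u be vectors with ‖Φx − u‖₂ ≤ ε and ‖Φx̂ − u‖₂ ≤ ε, and set h = x̂ − x. Let T₀ be a set of s coordinates of x of largest magnitude, and let T₁ be a set of s coordinates of h|_{T₀^c} of largest magnitude. Then ‖h|_{T₀∪T₁}‖₂ ≤ α ε + (ρ/√s) ‖h|_{T₀^c}‖₁, where ρ = √2 δ/(1−δ) and α = 2√(1+δ)/(1−δ). -/

import Mathlib

/-!
Write `h = x̂ - x` and `z = h|_{T₀ ∪ T₁}`, and cut `h|_{(T₀ ∪ T₁)ᶜ}` into blocks `T₂, T₃, …`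
of `s` entries of decreasing magnitude. Every entry of `T_j` is at most the mean magnitude on
`T_{j-1}`, so `‖h|_{T_j}‖₂ ≤ s^{-1/2} ‖h|_{T_{j-1}}‖₁` and the block norms add up to at most
`s^{-1/2} ‖h|_{T₀ᶜ}‖₁`. Polarizing the restricted isometry property gives
`|⟨Φa, Φb⟩| ≤ δ ‖a‖₂ ‖b‖₂` for disjointly supported `a, b` with `2s` nonzero entries in total,
which bounds each `⟨Φ h|_{T_i}, Φ h|_{T_j}⟩` (`i ≤ 1 < j`). Since `‖Φh‖₂ ≤ 2ε`,
`(1 - δ) ‖z‖₂² ≤ ‖Φz‖₂² = ⟨Φz, Φh⟩ - Σ_{j ≥ 2} ⟨Φz, Φ h|_{T_j}⟩` becomes a quadratic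
inequality in `‖z‖₂`, and `δ < 1` lets one divide by `1 - δ`.
-/

/-- The Euclidean (ℓ2) norm of a finitely-indexed real vector. -/
noncomputable def l2 {ι : Type*} [Fintype ι] (v : ι → ℝ) : ℝ :=
  Real.sqrt (∑ i, (v i) ^ 2)

/-- The ℓ1 norm of a finitely-indexed real vector. -/
noncomputable def l1 {ι : Type*} [Fintype ι] (v : ι → ℝ) : ℝ :=
  ∑ i, |v i|

/-- A vector is `s`-sparse if it has at most `s` nonzero coordinates. -/
def Sparse {d : ℕ} (s : ℕ) (v : Fin d → ℝ) : Prop :=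
  {i | v i ≠ 0}.ncard ≤ s

/-- The restriction of a vector to a set of coordinates (zero elsewhere). -/
def restr {d : ℕ} (S : Finset (Fin d)) (v : Fin d → ℝ) : Fin d → ℝ :=
  fun i => if i ∈ S then v i else 0

/-- `δ` satisfies the restricted isometry inequalities of `Φ` at sparsity level `r`
(quadratic form). -/
def RICq {m d : ℕ} (Φ : Matrix (Fin m) (Fin d) ℝ) (r : ℕ) (δ : ℝ) : Prop :=
  ∀ v : Fin d → ℝ, Sparse r v →
    (1 - δ) * (l2 v) ^ 2 ≤ (l2 (Φ.mulVec v)) ^ 2 ∧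
      (l2 (Φ.mulVec v)) ^ 2 ≤ (1 + δ) * (l2 v) ^ 2

open Finset Matrix

section L2

variable {ι : Type*} [Fintype ι]

lemma l2_eq_norm (v : ι → ℝ) : l2 v = ‖WithLp.toLp 2 v‖ := by
  simp [l2, EuclideanSpace.norm_eq]

lemma l2_nonneg (v : ι → ℝ) : 0 ≤ l2 v := Real.sqrt_nonneg _

lemma l2_eq_zero_iff {v : ι → ℝ} : l2 v = 0 ↔ v = 0 := by
  rw [l2_eq_norm, norm_eq_zero, WithLp.toLp_eq_zero]

@[simp]
lemma l2_zero : l2 (0 : ι → ℝ) = 0 := l2_eq_zero_iff.mpr rfl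

lemma l2_sq (v : ι → ℝ) : l2 v ^ 2 = v ⬝ᵥ v := by
  rw [l2, Real.sq_sqrt (by positivity)]
  simp [dotProduct, sq]

lemma abs_dotProduct_le_l2_mul_l2 (v w : ι → ℝ) : |v ⬝ᵥ w| ≤ l2 v * l2 w := by
  simpa [l2_eq_norm, EuclideanSpace.inner_eq_star_dotProduct, mul_comm] using
    abs_real_inner_le_norm (WithLp.toLp 2 w) (WithLp.toLp 2 v)

lemma l2_sub_le (v w : ι → ℝ) : l2 (v - w) ≤ l2 v + l2 w := by
  simpa only [l2_eq_norm, WithLp.toLp_sub] using norm_sub_le _ _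

lemma l2_smul (c : ℝ) (v : ι → ℝ) : l2 (c • v) = |c| * l2 v := by
  rw [l2_eq_norm, l2_eq_norm, WithLp.toLp_smul, norm_smul, Real.norm_eq_abs]

end L2

lemma l1_ite_eq_sum_compl {d : ℕ} (S : Finset (Fin d)) (v : Fin d → ℝ) :
    l1 (fun i => if i ∈ S then 0 else v i) = ∑ i ∈ Sᶜ, |v i| := by
  simp [l1, apply_ite, sum_ite, filter_not, compl_eq_univ_sdiff]

section Restr

variable {d : ℕ}

lemma restr_empty (v : Fin d → ℝ) : restr ∅ v = 0 := by
  ext i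
  simp [restr]

lemma restr_smul (S : Finset (Fin d)) (c : ℝ) (v : Fin d → ℝ) :
    restr S (c • v) = c • restr S v := by
  ext i
  by_cases hi : i ∈ S <;> simp [restr, hi]

lemma restr_union {A B : Finset (Fin d)} (hAB : Disjoint A B) (v : Fin d → ℝ) :
    restr (A ∪ B) v = restr A v + restr B v := by
  ext i
  by_cases hA : i ∈ A
  · simp [restr, hA, disjoint_left.mp hAB hA]
  · by_cases hB : i ∈ B <;> simp [restr, hA, hB]

lemma restr_add_restr_compl (S : Finset (Fin d)) (v : Fin d → ℝ) :
    restr S v + restr Sᶜ v = v := by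
  ext i
  by_cases hi : i ∈ S <;> simp [restr, hi]

lemma restr_dotProduct_restr {A B : Finset (Fin d)} (hAB : Disjoint A B) (a b : Fin d → ℝ) :
    restr A a ⬝ᵥ restr B b = 0 := by
  refine sum_eq_zero fun i _ => ?_
  by_cases hA : i ∈ A
  · simp [restr, disjoint_left.mp hAB hA]
  · simp [restr, hA]

lemma l2_restr_sq (S : Finset (Fin d)) (v : Fin d → ℝ) :
    l2 (restr S v) ^ 2 = ∑ i ∈ S, v i ^ 2 := by
  rw [l2_sq, dotProduct, ← sum_subset (subset_univ S)]
  · exact sum_congr rfl fun i hi => by simp [restr, hi, sq]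
  · intro i _ hi
    simp [restr, hi]

lemma l2_restr_union_sq {A B : Finset (Fin d)} (hAB : Disjoint A B) (v : Fin d → ℝ) :
    l2 (restr (A ∪ B) v) ^ 2 = l2 (restr A v) ^ 2 + l2 (restr B v) ^ 2 := by
  simp only [l2_restr_sq, sum_union hAB]

lemma l2_restr_add_l2_restr_le {A B : Finset (Fin d)} (hAB : Disjoint A B) (v : Fin d → ℝ) :
    l2 (restr A v) + l2 (restr B v) ≤ √2 * l2 (restr (A ∪ B) v) := by
  rw [← Real.sqrt_sq (l2_nonneg (restr (A ∪ B) v)), ← Real.sqrt_mul zero_le_two,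
    l2_restr_union_sq hAB]
  apply Real.le_sqrt_of_sq_le
  nlinarith [sq_nonneg (l2 (restr A v) - l2 (restr B v))]

lemma sparse_of_support_subset {r : ℕ} {v : Fin d → ℝ} {S : Finset (Fin d)}
    (hv : ∀ i, v i ≠ 0 → i ∈ S) (hS : S.card ≤ r) : Sparse r v :=
  calc {i | v i ≠ 0}.ncard ≤ (S : Set (Fin d)).ncard := Set.ncard_le_ncard hv S.finite_toSet
    _ = S.card := Set.ncard_coe_finset S
    _ ≤ r := hS

lemma sparse_restr (S : Finset (Fin d)) (v : Fin d → ℝ) : Sparse S.card (restr S v) :=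
  sparse_of_support_subset (fun i hi => by by_contra h; simp [restr, h] at hi) le_rfl

end Restr

section RestrictedIsometry

variable {m d r : ℕ} {Φ : Matrix (Fin m) (Fin d) ℝ} {δ : ℝ}

lemma RICq.l2_mulVec_le (hΦ : RICq Φ r δ) {v : Fin d → ℝ} (hv : Sparse r v) :
    l2 (Φ *ᵥ v) ≤ √(1 + δ) * l2 v := by
  rw [← Real.sqrt_sq (l2_nonneg (Φ *ᵥ v)), ← Real.sqrt_sq (l2_nonneg v),
    ← Real.sqrt_mul' _ (sq_nonneg _)]
  exact Real.sqrt_le_sqrt (hΦ v hv).2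

lemma RICq.abs_dotProduct_restr_le_half (hΦ : RICq Φ r δ) {A B : Finset (Fin d)}
    (hAB : Disjoint A B) (hr : A.card + B.card ≤ r) (a b : Fin d → ℝ) :
    |Φ *ᵥ restr A a ⬝ᵥ Φ *ᵥ restr B b| ≤
      δ * (l2 (restr A a) ^ 2 + l2 (restr B b) ^ 2) / 2 := by
  set p := restr A a
  set q := restr B b
  have hpq : p ⬝ᵥ q = 0 := restr_dotProduct_restr hAB a b
  have hsupp : ∀ c : ℝ, Sparse r (p + c • q) := fun c =>
    sparse_of_support_subset (S := A ∪ B) (fun i hi => by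
      by_contra h
      simp only [mem_union, not_or] at h
      simp [p, q, restr, h.1, h.2] at hi) ((card_union_le A B).trans hr)
  have hnorm : ∀ c : ℝ, c ^ 2 = 1 → l2 (p + c • q) ^ 2 = l2 p ^ 2 + l2 q ^ 2 := by
    intro c hc
    simp only [l2_sq, add_dotProduct, dotProduct_add, smul_dotProduct, dotProduct_smul,
      dotProduct_comm q p, hpq, smul_eq_mul]
    linear_combination (q ⬝ᵥ q) * hc
  have hpolar : 4 * (Φ *ᵥ p ⬝ᵥ Φ *ᵥ q) =
      l2 (Φ *ᵥ (p + (1 : ℝ) • q)) ^ 2 - l2 (Φ *ᵥ (p + (-1 : ℝ) • q)) ^ 2 := by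
    simp only [l2_sq, mulVec_add, mulVec_smul, add_dotProduct, dotProduct_add, smul_dotProduct,
      dotProduct_smul, dotProduct_comm (Φ *ᵥ q) (Φ *ᵥ p), smul_eq_mul]
    ring
  obtain ⟨hlo₁, hup₁⟩ := hΦ _ (hsupp 1)
  obtain ⟨hlo₂, hup₂⟩ := hΦ _ (hsupp (-1))
  rw [hnorm 1 (by norm_num)] at hlo₁ hup₁
  rw [hnorm (-1) (by norm_num)] at hlo₂ hup₂
  rw [abs_le]
  constructor <;> linarith

lemma RICq.abs_dotProduct_restr_le (hΦ : RICq Φ r δ) {A B : Finset (Fin d)}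
    (hAB : Disjoint A B) (hr : A.card + B.card ≤ r) (a b : Fin d → ℝ) :
    |Φ *ᵥ restr A a ⬝ᵥ Φ *ᵥ restr B b| ≤ δ * l2 (restr A a) * l2 (restr B b) := by
  -- rescale both vectors so that the two squared norms in the half-sum bound agree
  have hhalf := hΦ.abs_dotProduct_restr_le_half hAB hr (l2 (restr B b) • a) (l2 (restr A a) • b)
  simp only [restr_smul, mulVec_smul, smul_dotProduct, dotProduct_smul, l2_smul, smul_eq_mul,
    abs_mul, abs_of_nonneg (l2_nonneg _)] at hhalf
  rcases (mul_nonneg (l2_nonneg (restr A a)) (l2_nonneg (restr B b))).eq_or_lt with hxy | hxy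
  · obtain hx | hy := mul_eq_zero.mp hxy.symm
    · rw [l2_eq_zero_iff.mp hx]
      simp
    · rw [l2_eq_zero_iff.mp hy]
      simp
  · nlinarith

end RestrictedIsometry

lemma Finset.exists_subset_card_eq_forall_mem_sdiff_le {α β : Type*} [DecidableEq α]
    [LinearOrder β] (g : α → β) (R : Finset α) {k : ℕ} (hk : k ≤ R.card) :
    ∃ S ⊆ R, S.card = k ∧ ∀ i ∈ S, ∀ j ∈ R \ S, g j ≤ g i := by
  induction k with
  | zero => exact ⟨∅, empty_subset R, card_empty, by simp⟩
  | succ k ih =>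
    obtain ⟨S, hSR, hScard, hStop⟩ := ih (Nat.le_of_succ_le hk)
    have hne : (R \ S).Nonempty := by
      rw [← card_pos, card_sdiff_of_subset hSR]
      omega
    obtain ⟨a, haRS, hamax⟩ := exists_max_image (R \ S) g hne
    obtain ⟨haR, haS⟩ := mem_sdiff.mp haRS
    refine ⟨insert a S, insert_subset haR hSR, by rw [card_insert_of_notMem haS, hScard], ?_⟩
    intro i hi j hj
    have hjS : j ∈ R \ S := mem_sdiff.mpr ⟨(mem_sdiff.mp hj).1, fun h =>
      (mem_sdiff.mp hj).2 (mem_insert_of_mem h)⟩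
    rcases mem_insert.mp hi with rfl | hiS
    · exact hamax j hjS
    · exact hStop i hiS j hjS

section Blocks

variable {d : ℕ}

lemma l2_restr_le_sum_div_sqrt_card {S P : Finset (Fin d)} (v : Fin d → ℝ)
    (hSP : S.card ≤ P.card) (hdom : ∀ i ∈ S, ∀ p ∈ P, |v i| ≤ |v p|) :
    l2 (restr S v) ≤ (∑ p ∈ P, |v p|) / √P.card := by
  rcases P.card.eq_zero_or_pos with hP | hP
  · rw [card_eq_zero.mp (by omega : S.card = 0), restr_empty, l2_zero]
    positivity
  set M := ∑ p ∈ P, |v p|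
  have hP' : (0 : ℝ) < P.card := by exact_mod_cast hP
  have hbound : ∀ i ∈ S, |v i| ≤ M / P.card := fun i hi => by
    rw [le_div_iff₀ hP', mul_comm, ← nsmul_eq_mul, ← sum_const]
    exact sum_le_sum fun p hp => hdom i hi p hp
  refine le_of_pow_le_pow_left₀ two_ne_zero (by positivity) ?_
  calc l2 (restr S v) ^ 2 = ∑ i ∈ S, |v i| ^ 2 := by simp only [l2_restr_sq, sq_abs]
    _ ≤ ∑ _i ∈ S, (M / P.card) ^ 2 :=
        sum_le_sum fun i hi => pow_le_pow_left₀ (abs_nonneg _) (hbound i hi) 2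
    _ = S.card * (M / P.card) ^ 2 := by rw [sum_const, nsmul_eq_mul]
    _ ≤ P.card * (M / P.card) ^ 2 := by gcongr
    _ = (M / √P.card) ^ 2 := by
        rw [div_pow, div_pow, Real.sq_sqrt hP'.le]
        field_simp

lemma le_sum_abs_div_sqrt_of_subadditive {s : ℕ} (hs : 0 < s) (v : Fin d → ℝ)
    {F : (Fin d → ℝ) → ℝ} (hF_add : ∀ a b, F (a + b) ≤ F a + F b) {C : ℝ} (hC : 0 ≤ C)
    {R P : Finset (Fin d)} (hF : ∀ S ⊆ R, S.card ≤ s → F (restr S v) ≤ C * l2 (restr S v))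
    (hP : P.card = s) (hPR : Disjoint P R) (hdom : ∀ i ∈ R, ∀ p ∈ P, |v i| ≤ |v p|) :
    F (restr R v) ≤ C * (∑ i ∈ P ∪ R, |v i|) / √s := by
  induction hn : R.card using Nat.strong_induction_on generalizing R P with
  | _ n ih =>
  have hsum : ∑ i ∈ P ∪ R, |v i| = ∑ p ∈ P, |v p| + ∑ i ∈ R, |v i| := sum_union hPR
  have hfirst : ∀ S ⊆ R, S.card ≤ s → F (restr S v) ≤ C * (∑ p ∈ P, |v p|) / √s := by
    intro S hSR hS
    calc F (restr S v) ≤ C * l2 (restr S v) := hF S hSR hS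
      _ ≤ C * ((∑ p ∈ P, |v p|) / √s) := by
          gcongr
          exact hP ▸ l2_restr_le_sum_div_sqrt_card v (hP ▸ hS) fun i hi => hdom i (hSR hi)
      _ = C * (∑ p ∈ P, |v p|) / √s := (mul_div_assoc _ _ _).symm
  rcases le_or_gt n s with hRs | hRs
  · calc F (restr R v) ≤ C * (∑ p ∈ P, |v p|) / √s := hfirst R subset_rfl (hn ▸ hRs)
      _ ≤ C * (∑ i ∈ P ∪ R, |v i|) / √s := by
          gcongr
          exact subset_union_left
  · obtain ⟨S, hSR, hScard, hStop⟩ :=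
      exists_subset_card_eq_forall_mem_sdiff_le (fun i => |v i|) R (k := s) (by omega)
    have hrest := ih (R \ S).card (by rw [card_sdiff_of_subset hSR]; omega)
      (fun S' hS' => hF S' (hS'.trans sdiff_subset)) hScard disjoint_sdiff
      (fun i hi p hp => hStop p hp i hi) rfl
    rw [union_sdiff_of_subset hSR] at hrest
    calc F (restr R v) = F (restr S v + restr (R \ S) v) := by
          rw [← restr_union disjoint_sdiff, union_sdiff_of_subset hSR]
      _ ≤ F (restr S v) + F (restr (R \ S) v) := hF_add _ _
      _ ≤ C * (∑ p ∈ P, |v p|) / √s + C * (∑ i ∈ R, |v i|) / √s :=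
          add_le_add (hfirst S hSR hScard.le) hrest
      _ = C * (∑ i ∈ P ∪ R, |v i|) / √s := by rw [hsum]; ring

end Blocks

section Tail

variable {m d s : ℕ} {Φ : Matrix (Fin m) (Fin d) ℝ} {δ : ℝ}

lemma RICq.abs_dotProduct_restr_tail_le (hΦ : RICq Φ (2 * s) δ) (hδ0 : 0 ≤ δ) (hs : 0 < s)
    (v : Fin d → ℝ) {T P R : Finset (Fin d)} (hT : T.card ≤ s) (hTR : Disjoint T R)
    (hP : P.card = s) (hPR : Disjoint P R) (hdom : ∀ i ∈ R, ∀ p ∈ P, |v i| ≤ |v p|) :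
    |Φ *ᵥ restr T v ⬝ᵥ Φ *ᵥ restr R v| ≤
      δ * l2 (restr T v) * (∑ i ∈ P ∪ R, |v i|) / √s := by
  refine le_sum_abs_div_sqrt_of_subadditive hs v (F := fun w => |Φ *ᵥ restr T v ⬝ᵥ Φ *ᵥ w|)
    (fun a b => ?_) (mul_nonneg hδ0 (l2_nonneg _)) (fun S hSR hS => ?_) hP hPR hdom
  · simpa only [mulVec_add, dotProduct_add] using abs_add_le _ _
  · exact hΦ.abs_dotProduct_restr_le (disjoint_of_subset_right hSR hTR) (by omega) v v

lemma RICq.abs_dotProduct_restr_union_compl_le (hΦ : RICq Φ (2 * s) δ) (hδ0 : 0 ≤ δ)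
    (hs : 0 < s) (v : Fin d → ℝ) {T₀ T₁ : Finset (Fin d)} (hT₀ : T₀.card = s)
    (hT₁ : T₁.card = s) (hdisj : Disjoint T₀ T₁)
    (hdom : ∀ i ∈ T₁, ∀ j, j ∉ T₀ → j ∉ T₁ → |v j| ≤ |v i|) :
    |Φ *ᵥ restr (T₀ ∪ T₁) v ⬝ᵥ Φ *ᵥ restr (T₀ ∪ T₁)ᶜ v| ≤
      √2 * δ * l2 (restr (T₀ ∪ T₁) v) * (∑ i ∈ T₀ᶜ, |v i|) / √s := by
  have hT₁R : Disjoint T₁ (T₀ ∪ T₁)ᶜ := disjoint_compl_right.mono_left subset_union_right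
  have hT₀R : Disjoint T₀ (T₀ ∪ T₁)ᶜ := disjoint_compl_right.mono_left subset_union_left
  have hcompl : T₁ ∪ (T₀ ∪ T₁)ᶜ = T₀ᶜ := by
    ext i
    by_cases h₀ : i ∈ T₀
    · simp [h₀, disjoint_left.mp hdisj h₀]
    · by_cases h₁ : i ∈ T₁ <;> simp [h₀, h₁]
  have hdom' : ∀ i ∈ (T₀ ∪ T₁)ᶜ, ∀ p ∈ T₁, |v i| ≤ |v p| := fun i hi p hp => by
    simp only [mem_compl, mem_union, not_or] at hi
    exact hdom p hp i hi.1 hi.2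
  have htail := fun {T} (hT : T.card ≤ s) (hTR : Disjoint T (T₀ ∪ T₁)ᶜ) =>
    hcompl ▸ hΦ.abs_dotProduct_restr_tail_le hδ0 hs v hT hTR hT₁ hT₁R hdom'
  calc |Φ *ᵥ restr (T₀ ∪ T₁) v ⬝ᵥ Φ *ᵥ restr (T₀ ∪ T₁)ᶜ v|
      ≤ |Φ *ᵥ restr T₀ v ⬝ᵥ Φ *ᵥ restr (T₀ ∪ T₁)ᶜ v| +
          |Φ *ᵥ restr T₁ v ⬝ᵥ Φ *ᵥ restr (T₀ ∪ T₁)ᶜ v| := by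
        rw [restr_union hdisj, mulVec_add, add_dotProduct]
        exact abs_add_le _ _
    _ ≤ δ * l2 (restr T₀ v) * (∑ i ∈ T₀ᶜ, |v i|) / √s +
          δ * l2 (restr T₁ v) * (∑ i ∈ T₀ᶜ, |v i|) / √s :=
        add_le_add (htail hT₀.le hT₀R) (htail hT₁.le hT₁R)
    _ = δ * (l2 (restr T₀ v) + l2 (restr T₁ v)) * ((∑ i ∈ T₀ᶜ, |v i|) / √s) := by ring
    _ ≤ δ * (√2 * l2 (restr (T₀ ∪ T₁) v)) * ((∑ i ∈ T₀ᶜ, |v i|) / √s) := by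
        gcongr
        exact l2_restr_add_l2_restr_le hdisj v
    _ = √2 * δ * l2 (restr (T₀ ∪ T₁) v) * (∑ i ∈ T₀ᶜ, |v i|) / √s := by ring

lemma RICq.mul_l2_restr_sq_le (hΦ : RICq Φ (2 * s) δ) (hδ0 : 0 ≤ δ) (v : Fin d → ℝ)
    {T₀ T₁ : Finset (Fin d)} (hT₀ : T₀.card = s) (hT₁ : T₁.card = s) (hdisj : Disjoint T₀ T₁)
    (hdom : ∀ i ∈ T₁, ∀ j, j ∉ T₀ → j ∉ T₁ → |v j| ≤ |v i|) :
    (1 - δ) * l2 (restr (T₀ ∪ T₁) v) ^ 2 ≤ l2 (restr (T₀ ∪ T₁) v) *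
      (√(1 + δ) * l2 (Φ *ᵥ v) + √2 * δ * (∑ i ∈ T₀ᶜ, |v i|) / √s) := by
  rcases s.eq_zero_or_pos with rfl | hs
  · simp [card_eq_zero.mp hT₀, card_eq_zero.mp hT₁, restr_empty]
  have hcross := hΦ.abs_dotProduct_restr_union_compl_le hδ0 hs v hT₀ hT₁ hdisj hdom
  set z := restr (T₀ ∪ T₁) v
  have hz : Sparse (2 * s) z := by
    simpa only [card_union_of_disjoint hdisj, hT₀, hT₁, two_mul] using sparse_restr (T₀ ∪ T₁) v
  have hv : Φ *ᵥ v = Φ *ᵥ z + Φ *ᵥ restr (T₀ ∪ T₁)ᶜ v := by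
    rw [← mulVec_add, restr_add_restr_compl]
  have hmain : Φ *ᵥ z ⬝ᵥ Φ *ᵥ v ≤ √(1 + δ) * l2 z * l2 (Φ *ᵥ v) :=
    (le_abs_self _).trans <| (abs_dotProduct_le_l2_mul_l2 _ _).trans <|
      mul_le_mul_of_nonneg_right (hΦ.l2_mulVec_le hz) (l2_nonneg _)
  calc (1 - δ) * l2 z ^ 2 ≤ l2 (Φ *ᵥ z) ^ 2 := (hΦ z hz).1
    _ = Φ *ᵥ z ⬝ᵥ Φ *ᵥ v - Φ *ᵥ z ⬝ᵥ Φ *ᵥ restr (T₀ ∪ T₁)ᶜ v := by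
        rw [l2_sq, hv, dotProduct_add]
        ring
    _ ≤ √(1 + δ) * l2 z * l2 (Φ *ᵥ v) +
          √2 * δ * l2 z * (∑ i ∈ T₀ᶜ, |v i|) / √s := by
        linarith [neg_abs_le (Φ *ᵥ z ⬝ᵥ Φ *ᵥ restr (T₀ ∪ T₁)ᶜ v)]
    _ = l2 z * (√(1 + δ) * l2 (Φ *ᵥ v) + √2 * δ * (∑ i ∈ T₀ᶜ, |v i|) / √s) := by ring

end Tail

lemma le_div_of_mul_sq_le_mul {a b x : ℝ} (ha : 0 < a) (hb : 0 ≤ b) (hx : 0 ≤ x)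
    (h : a * x ^ 2 ≤ x * b) : x ≤ b / a := by
  rw [le_div_iff₀ ha]
  rcases hx.eq_or_lt with rfl | hx
  · simpa using hb
  · nlinarith

theorem stmt15_general (m d s : ℕ) (Φ : Matrix (Fin m) (Fin d) ℝ)
    (δ : ℝ) (hδ0 : 0 ≤ δ) (hδ : δ < Real.sqrt 2 - 1) (hΦ : RICq Φ (2 * s) δ)
    (x xhat : Fin d → ℝ) (u : Fin m → ℝ) (ε : ℝ)
    (hx : l2 (Φ.mulVec x - u) ≤ ε) (hxhat : l2 (Φ.mulVec xhat - u) ≤ ε)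
    (T₀ T₁ : Finset (Fin d)) (hT₀card : T₀.card = s)
    (hT₁card : T₁.card = s) (hdisj : Disjoint T₀ T₁)
    (hT₁ : ∀ i ∈ T₁, ∀ j, j ∉ T₀ → j ∉ T₁ → |xhat j - x j| ≤ |xhat i - x i|)
    (ρ α : ℝ) (hρ : ρ = Real.sqrt 2 * δ / (1 - δ))
    (hα : α = 2 * Real.sqrt (1 + δ) / (1 - δ)) :
    l2 (restr (T₀ ∪ T₁) (xhat - x)) ≤
      α * ε + ρ / Real.sqrt s * l1 (fun i => if i ∈ T₀ then 0 else xhat i - x i) := by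
  have hδ1 : 0 < 1 - δ := by
    linarith [(Real.sqrt_lt' two_pos).mpr (by norm_num : (2 : ℝ) < 2 ^ 2)]
  have hε : 0 ≤ ε := (l2_nonneg _).trans hx
  have hΦv : l2 (Φ *ᵥ (xhat - x)) ≤ 2 * ε := by
    rw [mulVec_sub, ← sub_sub_sub_cancel_right _ _ u]
    linarith [l2_sub_le (Φ *ᵥ xhat - u) (Φ *ᵥ x - u)]
  have hquad := hΦ.mul_l2_restr_sq_le hδ0 (xhat - x) hT₀card hT₁card hdisj hT₁
  have hl1 : l1 (fun i => if i ∈ T₀ then 0 else xhat i - x i) = ∑ i ∈ T₀ᶜ, |(xhat - x) i| :=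
    l1_ite_eq_sum_compl T₀ (xhat - x)
  rw [hl1]
  calc l2 (restr (T₀ ∪ T₁) (xhat - x))
      ≤ (√(1 + δ) * (2 * ε) + √2 * δ * (∑ i ∈ T₀ᶜ, |(xhat - x) i|) / √s) / (1 - δ) := by
        refine le_div_of_mul_sq_le_mul hδ1 (by positivity) (l2_nonneg _) (hquad.trans ?_)
        gcongr
        exact l2_nonneg _
    _ = α * ε + ρ / √s * ∑ i ∈ T₀ᶜ, |(xhat - x) i| := by
        rw [hα, hρ]
        ring

/-- Suppose `δ_{2s} = δ < √2 − 1`, `‖Φx − u‖₂ ≤ ε`, `‖Φx̂ − u‖₂ ≤ ε`,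
`h = x̂ − x`, `T₀` a set of `s` largest-magnitude coordinates of `x`, and `T₁` a set of
`s` largest-magnitude coordinates of `h|_{T₀^c}`. Then
`‖h|_{T₀∪T₁}‖₂ ≤ α ε + (ρ/√s) ‖h|_{T₀^c}‖₁`, where `ρ = √2 δ/(1−δ)` and
`α = 2√(1+δ)/(1−δ)`. -/
theorem stmt15 (m d s : ℕ) (Φ : Matrix (Fin m) (Fin d) ℝ)
    (δ : ℝ) (hδ0 : 0 ≤ δ) (hδ : δ < Real.sqrt 2 - 1) (hΦ : RICq Φ (2 * s) δ)
    (x xhat : Fin d → ℝ) (u : Fin m → ℝ) (ε : ℝ)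
    (hx : l2 (Φ.mulVec x - u) ≤ ε) (hxhat : l2 (Φ.mulVec xhat - u) ≤ ε)
    (T₀ T₁ : Finset (Fin d)) (hT₀card : T₀.card = s)
    (hT₀ : ∀ i ∈ T₀, ∀ j ∉ T₀, |x j| ≤ |x i|)
    (hT₁card : T₁.card = s) (hdisj : Disjoint T₀ T₁)
    (hT₁ : ∀ i ∈ T₁, ∀ j, j ∉ T₀ → j ∉ T₁ → |xhat j - x j| ≤ |xhat i - x i|)
    (ρ α : ℝ) (hρ : ρ = Real.sqrt 2 * δ / (1 - δ))
    (hα : α = 2 * Real.sqrt (1 + δ) / (1 - δ)) :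
    l2 (restr (T₀ ∪ T₁) (xhat - x)) ≤
      α * ε + ρ / Real.sqrt s * l1 (fun i => if i ∈ T₀ then 0 else xhat i - x i) :=
  stmt15_general m d s Φ δ hδ0 hδ hΦ x xhat u ε hx hxhat T₀ T₁ hT₀card hT₁card hdisj hT₁ ρ α hρ hα
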